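/- arXiv:2406.10823 — 2 statements merged into one kernel-verified Lean document; each statement's English description precedes it below -/
import Mathlib

section
/- For ε > 0 and v > 0 define C_ε(v) := (√(v² + ε²/4) − ε/2)/v. Fix η, T > 0 and 0 < ε ≤ η², and define a : ℕ → ℝ by a(0) = η² + T and a(k+1) = C_ε(a(k))² · a(k). Then: (i) a(k+1) < a(k) for all k; (ii) whenever ε ≤ 4·a(k), one has a(k+1) ≥ a(k) − ε; and consequently (iii) for every k with kε ≤ T, a(k) ≥ η² + T − kε ≥ η². -/
open Real

/-- `C_ε(v) = (√(v² + ε²/4) − ε/2)/v`, the correlation coefficient of the equal-marginal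
Schrödinger bridge at temperature `ε` with Gaussian marginal of variance `v`. -/
noncomputable def sbCorr (ε v : ℝ) : ℝ := (Real.sqrt (v ^ 2 + ε ^ 2 / 4) - ε / 2) / v

lemma sbCorr_step (ε v : ℝ) (hε : 0 < ε) (hv : 0 < v) :
    0 < sbCorr ε v ^ 2 * v ∧ sbCorr ε v ^ 2 * v < v ∧ v - ε ≤ sbCorr ε v ^ 2 * v := by
  set s := Real.sqrt (v ^ 2 + ε ^ 2 / 4) with hs
  have hnn : (0:ℝ) ≤ v ^ 2 + ε ^ 2 / 4 := by positivity
  have hs2 : s ^ 2 = v ^ 2 + ε ^ 2 / 4 := Real.sq_sqrt hnn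
  have hslt : s < v + ε / 2 := by
    rw [hs, show v + ε / 2 = Real.sqrt ((v + ε / 2) ^ 2) from (Real.sqrt_sq (by linarith)).symm]
    exact Real.sqrt_lt_sqrt hnn (by nlinarith)
  have hsgt : ε / 2 < s := by
    rw [hs, show ε / 2 = Real.sqrt ((ε / 2) ^ 2) from (Real.sqrt_sq (by linarith)).symm]
    exact Real.sqrt_lt_sqrt (by positivity) (by nlinarith)
  have hform : sbCorr ε v ^ 2 * v = (s - ε / 2) ^ 2 / v := by
    unfold sbCorr; rw [← hs]; field_simp
  rw [hform]
  refine ⟨div_pos (pow_pos (by linarith) 2) hv, ?_, ?_⟩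
  · rw [div_lt_iff₀ hv]
    nlinarith [mul_pos (show (0:ℝ) < v - (s - ε / 2) by linarith)
      (show (0:ℝ) < v + (s - ε / 2) by linarith)]
  · rw [le_div_iff₀ hv]
    nlinarith [mul_lt_mul_of_pos_left hslt hε]

/-- The variances `a k` of the iterated Schrödinger bridge scheme for the time-reversed
heat flow started from `N(0, (η² + T) I_d)` with step size `0 < ε ≤ η²` decrease strictly,
decrease by at most `ε` per step (as long as `ε ≤ 4 a k`), and remain bounded below by
`η² + T − kε ≥ η²` over the horizon `kε ≤ T`. -/
theorem sb_scheme_reversed_heat_flow_variance_bounds (η T ε : ℝ)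
    (hη : 0 < η) (hT : 0 < T) (hε : 0 < ε) (hεη : ε ≤ η ^ 2)
    (a : ℕ → ℝ) (ha0 : a 0 = η ^ 2 + T)
    (harec : ∀ k : ℕ, a (k + 1) = (sbCorr ε (a k)) ^ 2 * a k) :
    (∀ k : ℕ, a (k + 1) < a k) ∧
    (∀ k : ℕ, ε ≤ 4 * a k → a k - ε ≤ a (k + 1)) ∧
    (∀ k : ℕ, (k : ℝ) * ε ≤ T → η ^ 2 + T - k * ε ≤ a k ∧ η ^ 2 ≤ a k) := by
  have hpos : ∀ k, 0 < a k := by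
    intro k
    induction k with
    | zero => rw [ha0]; positivity
    | succ n ih => rw [harec n]; exact (sbCorr_step ε (a n) hε ih).1
  refine ⟨fun k => ?_, fun k _ => ?_, fun k => ?_⟩
  · rw [harec k]; exact (sbCorr_step ε (a k) hε (hpos k)).2.1
  · rw [harec k]; exact (sbCorr_step ε (a k) hε (hpos k)).2.2
  · induction k with
    | zero => intro _; rw [ha0]; constructor <;> simp <;> nlinarith
    | succ n ih =>
      intro hkT
      have hn : (n : ℝ) * ε ≤ T := by
        push_cast at hkT ⊢
        nlinarith
      obtain ⟨h1, h2⟩ := ih hn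
      have hstep : a n - ε ≤ a (n + 1) := by
        rw [harec n]; exact (sbCorr_step ε (a n) hε (hpos n)).2.2
      push_cast at hkT ⊢
      constructor <;> nlinarith
end

section
/- For ε > 0 and v > 0 define C_ε(v) := (√(v² + ε²/4) − ε/2)/v. Fix 0 < η < 1, T > 0, and 0 < ε ≤ 4η²/(1 − η²). Define a : ℕ → ℝ by a(0) = 1 − e^{−T}(1 − η²) and a(k+1) = C_ε(a(k)/(1 − a(k)))² · a(k). Then for every k with kε ≤ T: (i) a(k+1) < a(k) < 1; (ii) a(k+1) ≥ a(k) − ε(1 − a(k)); and consequently (iii) 1 − a(k) ≤ (1 + ε)^k (1 − a(0)) and a(k) ≥ 1 − e^{εk}·e^{−T}(1 − η²) ≥ η². -/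
open Real

lemma sb_step (ε a : ℝ) (hε : 0 < ε) (ha0 : 0 < a) (ha1 : a < 1) :
    (sbCorr ε (a / (1 - a))) ^ 2 * a < a ∧
    a - ε * (1 - a) ≤ (sbCorr ε (a / (1 - a))) ^ 2 * a := by
  have h1a : 0 < 1 - a := by linarith
  set v : ℝ := a / (1 - a) with hv
  have hvpos : 0 < v := div_pos ha0 h1a
  have hva : v * (1 - a) = a := div_mul_cancel₀ a h1a.ne'
  set s : ℝ := Real.sqrt (v ^ 2 + ε ^ 2 / 4) with hs
  have hs2 : s ^ 2 = v ^ 2 + ε ^ 2 / 4 := Real.sq_sqrt (by positivity)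
  have hsnn : 0 ≤ s := Real.sqrt_nonneg _
  have hslt : s < v + ε / 2 := by nlinarith
  have hsgt : ε / 2 < s := by nlinarith
  have hC : sbCorr ε v = (s - ε / 2) / v := rfl
  constructor
  · rw [hC, div_pow]
    have h2 : (s - ε / 2) ^ 2 < v ^ 2 := by nlinarith
    have h3 : (s - ε / 2) ^ 2 / v ^ 2 < 1 := (div_lt_one (by positivity)).mpr h2
    nlinarith
  · rw [hC, div_pow, div_mul_eq_mul_div, le_div_iff₀ (by positivity)]
    have key : v ^ 2 - ε * v ≤ (s - ε / 2) ^ 2 := by nlinarith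
    have h3 : ε * v * (v * (1 - a)) = ε * v * a := by rw [hva]
    nlinarith [mul_le_mul_of_nonneg_right key ha0.le]

/-- The variances `a k` of the iterated Schrödinger bridge scheme for the time-reversed
Ornstein–Uhlenbeck flow, started from variance `a 0 = 1 − e^{−T}(1 − η²)` with `η² < 1`
and step size `0 < ε ≤ 4η²/(1 − η²)`: over the horizon `kε ≤ T` they decrease strictly,
stay below `1`, decrease by at most `ε(1 − a k)` per step, and satisfy
`1 − a k ≤ (1 + ε)^k (1 − a 0)` and `a k ≥ 1 − e^{εk}e^{−T}(1 − η²) ≥ η²`. -/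
theorem sb_scheme_reversed_ou_variance_bounds (η T ε : ℝ)
    (hη0 : 0 < η) (hη1 : η < 1) (hT : 0 < T)
    (hε : 0 < ε) (hεub : ε ≤ 4 * η ^ 2 / (1 - η ^ 2))
    (a : ℕ → ℝ) (ha0 : a 0 = 1 - Real.exp (-T) * (1 - η ^ 2))
    (harec : ∀ k : ℕ, a (k + 1) = (sbCorr ε (a k / (1 - a k))) ^ 2 * a k) :
    ∀ k : ℕ, (k : ℝ) * ε ≤ T →
      a (k + 1) < a k ∧ a k < 1 ∧
      a k - ε * (1 - a k) ≤ a (k + 1) ∧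
      1 - a k ≤ (1 + ε) ^ k * (1 - a 0) ∧
      1 - Real.exp (ε * k) * Real.exp (-T) * (1 - η ^ 2) ≤ a k ∧
      η ^ 2 ≤ a k := by
  have h1η : 0 < 1 - η ^ 2 := by nlinarith
  have hexpT : Real.exp (-T) < 1 := by
    rw [Real.exp_lt_one_iff]; linarith
  have hexpTpos : 0 < Real.exp (-T) := Real.exp_pos _
  have ha0lt : a 0 < 1 := by rw [ha0]; nlinarith
  have ha0gt : η ^ 2 < a 0 := by rw [ha0]; nlinarith
  have h1a0 : 1 - a 0 = Real.exp (-T) * (1 - η ^ 2) := by rw [ha0]; ring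
  have hpow : ∀ k : ℕ, ((1 + ε) : ℝ) ^ k ≤ Real.exp (ε * k) := by
    intro k
    have h1 : (1 + ε : ℝ) ≤ Real.exp ε := by
      have := Real.add_one_le_exp ε; linarith
    calc ((1 + ε) : ℝ) ^ k ≤ (Real.exp ε) ^ k := pow_le_pow_left₀ (by linarith) h1 k
      _ = Real.exp (ε * k) := by rw [← Real.exp_nat_mul]; ring_nf
  have hexple : ∀ k : ℕ, (k : ℝ) * ε ≤ T → Real.exp (ε * k) * Real.exp (-T) ≤ 1 := by
    intro k hk
    rw [← Real.exp_add]
    calc Real.exp (ε * k + -T) ≤ Real.exp 0 := Real.exp_le_exp.mpr (by linarith [mul_comm ε (k:ℝ)])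
      _ = 1 := Real.exp_zero
  have H : ∀ k : ℕ, (k : ℝ) * ε ≤ T →
      η ^ 2 ≤ a k ∧ a k < 1 ∧ 1 - a k ≤ (1 + ε) ^ k * (1 - a 0) := by
    intro k
    induction k with
    | zero => intro _; exact ⟨ha0gt.le, ha0lt, by simp⟩
    | succ k ih =>
      intro hkT
      have hcast : ((k + 1 : ℕ) : ℝ) = (k : ℝ) + 1 := by push_cast; ring
      rw [hcast] at hkT
      have hk : (k : ℝ) * ε ≤ T := by nlinarith
      obtain ⟨hη2, hlt1, hbound⟩ := ih hk
      have hpos : 0 < a k := lt_of_lt_of_le (by positivity) hη2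
      obtain ⟨hdec, hlow⟩ := sb_step ε (a k) hε hpos hlt1
      rw [← harec k] at hdec hlow
      have hb1 : 1 - a (k + 1) ≤ (1 + ε) * (1 - a k) := by nlinarith
      have hb2 : 1 - a (k + 1) ≤ (1 + ε) ^ (k + 1) * (1 - a 0) := by
        calc 1 - a (k + 1) ≤ (1 + ε) * (1 - a k) := hb1
          _ ≤ (1 + ε) * ((1 + ε) ^ k * (1 - a 0)) :=
            mul_le_mul_of_nonneg_left hbound (by linarith)
          _ = (1 + ε) ^ (k + 1) * (1 - a 0) := by ring
      refine ⟨?_, by linarith, hb2⟩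
      have h4 : (1 + ε) ^ (k + 1) * (1 - a 0) ≤ Real.exp (ε * (k + 1)) * (Real.exp (-T) * (1 - η ^ 2)) := by
        rw [← h1a0]
        have := hpow (k + 1)
        have hc : ((k + 1 : ℕ) : ℝ) = (k : ℝ) + 1 := by push_cast; ring
        rw [hc] at this
        have h1a0nn : 0 ≤ 1 - a 0 := by linarith
        nlinarith [Real.exp_pos (ε * ((k : ℝ) + 1))]
      have h5 : Real.exp (ε * ((k : ℝ) + 1)) * Real.exp (-T) ≤ 1 := by
        have := hexple (k + 1) (by rw [hcast]; exact hkT)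
        rwa [show ((k + 1 : ℕ) : ℝ) = (k : ℝ) + 1 by push_cast; ring] at this
      have : 1 - a (k + 1) ≤ 1 - η ^ 2 := by
        calc 1 - a (k + 1) ≤ (1 + ε) ^ (k + 1) * (1 - a 0) := hb2
          _ ≤ Real.exp (ε * ((k : ℝ) + 1)) * (Real.exp (-T) * (1 - η ^ 2)) := h4
          _ = (Real.exp (ε * ((k : ℝ) + 1)) * Real.exp (-T)) * (1 - η ^ 2) := by ring
          _ ≤ 1 * (1 - η ^ 2) := mul_le_mul_of_nonneg_right h5 h1η.le
          _ = 1 - η ^ 2 := one_mul _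
      linarith
  intro k hkT
  obtain ⟨hη2, hlt1, hbound⟩ := H k hkT
  have hpos : 0 < a k := lt_of_lt_of_le (by positivity) hη2
  obtain ⟨hdec, hlow⟩ := sb_step ε (a k) hε hpos hlt1
  rw [← harec k] at hdec hlow
  have h5 : Real.exp (ε * k) * Real.exp (-T) ≤ 1 := hexple k hkT
  have h4 : (1 + ε) ^ k * (1 - a 0) ≤ Real.exp (ε * k) * Real.exp (-T) * (1 - η ^ 2) := by
    have := hpow k
    have h1a0nn : 0 ≤ 1 - a 0 := by linarith
    rw [h1a0]
    nlinarith [Real.exp_pos (ε * (k : ℝ)), mul_pos hexpTpos h1η]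
  exact ⟨hdec, hlt1, hlow, hbound, by nlinarith, hη2⟩
end
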